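/- arXiv:2307.04786 — 2 statements merged into one kernel-verified Lean document; each statement's English description precedes it below -/
import Mathlib

section
/- If σ is a strategy for Nature over M_V and U ⊆ V, then the restriction σ|_U := σ ∩ Hist(M_U) is a strategy for Nature over M_U. -/
/-- A causal measurement scenario: a type of measurements `X`, outcome sets
`O x`, and an enabling relation from sets of events to measurements. -/
structure CMS (X Ω : Type*) where
  O : X → Set Ω
  enab : Set (X × Ω) → X → Prop

namespace CMS

variable {X Ω : Type*}

/-- A set of events is consistent if it is the graph of a partial function. -/
def consistent (s : Set (X × Ω)) : Prop :=
  ∀ x o o', (x, o) ∈ s → (x, o') ∈ s → o = o'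

/-- The domain of a set of events: the measurements performed. -/
def domain (s : Set (X × Ω)) : Set X := {x | ∃ o, (x, o) ∈ s}

/-- Accessibility: `x` may be performed after the events in `s`. -/
def acc (M : CMS X Ω) (s : Set (X × Ω)) (x : X) : Prop :=
  x ∉ domain s ∧ ∃ t ⊆ s, M.enab t x

/-- Histories: the least family containing `∅` and closed under adjoining
an event `(x, o)` for accessible `x` and `o ∈ O x`. -/
inductive Hist (M : CMS X Ω) : Set (X × Ω) → Prop
  | empty : Hist M ∅
  | step {s : Set (X × Ω)} {x : X} {o : Ω} :
      Hist M s → M.acc s x → o ∈ M.O x → Hist M (s ∪ {(x, o)})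

/-- A strategy for Nature: a (nonempty) downward-closed set of histories,
deterministic and total: unique outcome responses to accessible measurements. -/
structure IsStrategy (M : CMS X Ω) (σ : Set (Set (X × Ω))) : Prop where
  nonempty : σ.Nonempty
  hist : ∀ s ∈ σ, M.Hist s
  dc : ∀ s t : Set (X × Ω), M.Hist s → s ⊆ t → t ∈ σ → s ∈ σ
  resp : ∀ s ∈ σ, ∀ x : X, M.acc s x →
    ∃! o : Ω, o ∈ M.O x ∧ s ∪ {(x, o)} ∈ σ

/-- The restriction `M_U` of a scenario to a subset `U` of measurements. -/
def restrict (M : CMS X Ω) (U : Set X) : CMS X Ω where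
  O := M.O
  enab := fun s x => M.enab s x ∧ domain s ∪ {x} ⊆ U

end CMS

open CMS

namespace CMS

variable {X Ω : Type*} {M N : CMS X Ω}

theorem acc.mono (henab : ∀ s x, M.enab s x → N.enab s x) {s : Set (X × Ω)} {x : X}
    (h : M.acc s x) : N.acc s x :=
  let ⟨hx, t, hts, ht⟩ := h
  ⟨hx, t, hts, henab t x ht⟩

theorem Hist.mono (hO : ∀ x, M.O x ⊆ N.O x) (henab : ∀ s x, M.enab s x → N.enab s x)
    {s : Set (X × Ω)} (h : M.Hist s) : N.Hist s := by
  induction h with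
  | empty => exact .empty
  | step _ hacc ho ih => exact .step ih (hacc.mono henab) (hO _ ho)

/-- Totality survives the cut because answering an `M`-accessible measurement after an
`M`-history yields an `M`-history again. -/
theorem IsStrategy.inter_hist (hO : M.O = N.O) (henab : ∀ s x, M.enab s x → N.enab s x)
    {σ : Set (Set (X × Ω))} (hσ : N.IsStrategy σ) : M.IsStrategy (σ ∩ {s | M.Hist s}) := by
  have hist_mono {s : Set (X × Ω)} : M.Hist s → N.Hist s :=
    Hist.mono (fun x ↦ by rw [hO]) henab
  refine ⟨?nonempty, fun s hs ↦ hs.2, ?dc, ?resp⟩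
  case nonempty =>
    obtain ⟨t, ht⟩ := hσ.nonempty
    exact ⟨∅, hσ.dc ∅ t .empty (Set.empty_subset t) ht, .empty⟩
  case dc =>
    exact fun s t hs hst ht ↦ ⟨hσ.dc s t (hist_mono hs) hst ht.1, hs⟩
  case resp =>
    intro s hs x hx
    obtain ⟨o, ⟨ho, hoσ⟩, huniq⟩ := hσ.resp s hs.1 x (hx.mono henab)
    rw [← hO] at ho huniq
    exact ⟨o, ⟨ho, hoσ, Hist.step hs.2 hx ho⟩, fun o' ⟨ho', hσ', _⟩ ↦ huniq o' ⟨ho', hσ'⟩⟩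

end CMS

/-- The restriction of a strategy over `M_V` to `U ⊆ V` is a strategy over `M_U`. -/
theorem restrict_strategy {X Ω : Type*} (M : CMS X Ω) (U V : Set X) (hUV : U ⊆ V)
    (σ : Set (Set (X × Ω))) (hσ : (M.restrict V).IsStrategy σ) :
    (M.restrict U).IsStrategy (σ ∩ {s | (M.restrict U).Hist s}) :=
  hσ.inter_hist (M := M.restrict U) (N := M.restrict V) rfl fun _ _ h ↦ ⟨h.1, h.2.trans hUV⟩
end

section
/- Let {U_i}_{i∈I} be a family of subsets of X and {σ_i}_{i∈I} a compatible family of strategies (σ_i a strategy over M_{U_i}, with σ_i ∩ Hist(M_{U_i ∩ U_j}) = σ_j ∩ Hist(M_{U_i ∩ U_j}) for all i,j). Then the union σ' = ⋃_i σ_i is deterministic: if s ∪ {(x,o₁)} ∈ σ' and s ∪ {(x,o₂)} ∈ σ' with x ∉ dom(s), then o₁ = o₂. -/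
open CMS

namespace CMS

variable {X Ω : Type*}

lemma domain_mono {s t : Set (X × Ω)} (h : s ⊆ t) : domain s ⊆ domain t :=
  fun _ ⟨o, ho⟩ => ⟨o, h ho⟩

lemma domain_union_singleton (s : Set (X × Ω)) (x : X) (o : Ω) :
    domain (s ∪ {(x, o)}) = domain s ∪ {x} := by
  ext y
  simp only [domain, Set.mem_ofPred_eq, Set.mem_union, Set.mem_singleton_iff, Prod.mk.injEq]
  grind

variable {M : CMS X Ω}

lemma Hist.mem_O {t : Set (X × Ω)} (h : M.Hist t) {x : X} {o : Ω} (hxo : (x, o) ∈ t) :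
    o ∈ M.O x := by
  induction h with
  | empty => exact absurd hxo (Set.notMem_empty _)
  | step _ _ hp ih =>
    rcases hxo with hxo | ⟨rfl, rfl⟩
    · exact ih hxo
    · exact hp

lemma Hist.exists_acc_subset {t : Set (X × Ω)} (h : M.Hist t) {x : X} {o : Ω}
    (hxo : (x, o) ∈ t) : ∃ v ⊆ t, M.Hist v ∧ M.acc v x := by
  induction h with
  | empty => exact absurd hxo (Set.notMem_empty _)
  | step hu hacc _ ih =>
    rcases hxo with hxo | ⟨rfl, rfl⟩
    · obtain ⟨v, hvt, hv, hvx⟩ := ih hxo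
      exact ⟨v, hvt.trans Set.subset_union_left, hv, hvx⟩
    · exact ⟨_, Set.subset_union_left, hu, hacc⟩

theorem hist_restrict_iff {U : Set X} {t : Set (X × Ω)} :
    (M.restrict U).Hist t ↔ M.Hist t ∧ domain t ⊆ U := by
  constructor
  · intro h
    induction h with
    | empty => exact ⟨Hist.empty, fun _ ⟨_, ho⟩ => absurd ho (Set.notMem_empty _)⟩
    | step _ hacc hp ih =>
      obtain ⟨hnd, v, hvs, henab, hvU⟩ := hacc
      refine ⟨Hist.step ih.1 ⟨hnd, v, hvs, henab⟩ hp, ?_⟩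
      rw [domain_union_singleton]
      exact Set.union_subset ih.2 (Set.union_subset_iff.1 hvU).2
  · rintro ⟨h, hU⟩
    induction h with
    | empty => exact Hist.empty
    | step _ hacc hp ih =>
      rw [domain_union_singleton, Set.union_subset_iff] at hU
      obtain ⟨hnd, v, hvs, henab⟩ := hacc
      exact Hist.step (ih hU.1)
        ⟨hnd, v, hvs, henab, Set.union_subset ((domain_mono hvs).trans hU.1) hU.2⟩ hp

theorem IsStrategy.eq_of_union_singleton_mem {σ : Set (Set (X × Ω))} (hσ : M.IsStrategy σ)
    {s : Set (X × Ω)} {x : X} {o₁ o₂ : Ω}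
    (h₁ : s ∪ {(x, o₁)} ∈ σ) (h₂ : s ∪ {(x, o₂)} ∈ σ) : o₁ = o₂ := by
  -- `s` itself need not be a history: go back to the stage `v ⊆ s` at which `x` was measured.
  obtain ⟨v, hv₁, hv, hvx⟩ := (hσ.hist _ h₁).exists_acc_subset (Set.mem_union_right s rfl)
  have hvs : v ⊆ s := fun p hp =>
    (hv₁ hp).resolve_right fun hpx => hvx.1 ⟨o₁, hpx ▸ hp⟩
  have extend : ∀ o, s ∪ {(x, o)} ∈ σ → o ∈ M.O x ∧ v ∪ {(x, o)} ∈ σ := fun o h =>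
    have hO := (hσ.hist _ h).mem_O (Set.mem_union_right s rfl)
    ⟨hO, hσ.dc _ _ (hv.step hvx hO) (Set.union_subset_union_left _ hvs) h⟩
  obtain ⟨o, -, huniq⟩ := hσ.resp v (hσ.dc v _ hv hv₁ h₁) x hvx
  exact (huniq o₁ (extend o₁ h₁)).trans (huniq o₂ (extend o₂ h₂)).symm

end CMS

theorem union_deterministic_general {X Ω : Type*} (M : CMS X Ω) {I : Type*}
    (U : I → Set X) (σ : I → Set (Set (X × Ω)))
    (hstrat : ∀ i, (M.restrict (U i)).IsStrategy (σ i))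
    (hcompat : ∀ i j, σ i ∩ {s | (M.restrict (U i ∩ U j)).Hist s} =
      σ j ∩ {s | (M.restrict (U i ∩ U j)).Hist s})
    (s : Set (X × Ω)) (x : X) (o₁ o₂ : Ω)
    (h₁ : s ∪ {(x, o₁)} ∈ ⋃ i, σ i) (h₂ : s ∪ {(x, o₂)} ∈ ⋃ i, σ i) :
    o₁ = o₂ := by
  obtain ⟨i, h₁⟩ := Set.mem_iUnion.1 h₁
  obtain ⟨j, h₂⟩ := Set.mem_iUnion.1 h₂
  obtain ⟨-, hdom₁⟩ := hist_restrict_iff.1 ((hstrat i).hist _ h₁)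
  obtain ⟨hist₂, hdom₂⟩ := hist_restrict_iff.1 ((hstrat j).hist _ h₂)
  rw [domain_union_singleton] at hdom₁ hdom₂
  have hij : (M.restrict (U i ∩ U j)).Hist (s ∪ {(x, o₂)}) :=
    hist_restrict_iff.2 ⟨hist₂, by rw [domain_union_singleton]; exact Set.subset_inter hdom₁ hdom₂⟩
  have h₂i : s ∪ {(x, o₂)} ∈ σ i := ((hcompat i j).superset ⟨h₂, hij⟩).1
  exact (hstrat i).eq_of_union_singleton_mem h₁ h₂i

/-- The union of a compatible family of strategies is deterministic. -/
theorem union_deterministic {X Ω : Type*} (M : CMS X Ω) {I : Type*}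
    (U : I → Set X) (σ : I → Set (Set (X × Ω)))
    (hstrat : ∀ i, (M.restrict (U i)).IsStrategy (σ i))
    (hcompat : ∀ i j, σ i ∩ {s | (M.restrict (U i ∩ U j)).Hist s} =
      σ j ∩ {s | (M.restrict (U i ∩ U j)).Hist s})
    (s : Set (X × Ω)) (x : X) (o₁ o₂ : Ω) (hx : x ∉ CMS.domain s)
    (h₁ : s ∪ {(x, o₁)} ∈ ⋃ i, σ i) (h₂ : s ∪ {(x, o₂)} ∈ ⋃ i, σ i) :
    o₁ = o₂ :=
  union_deterministic_general M U σ hstrat hcompat s x o₁ o₂ h₁ h₂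
end
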